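/- For any word X over the alphabet Ψ and any natural number n: if the image of X·t^n in the algebra H is 0, then the image of X in H is 0; and if the image of s^n·X in H is 0, then the image of X in H is 0. -/

import Mathlib

noncomputable section

/-- Direction of the head movement of the Turing machine. -/
inductive Dir
  | L
  | R
deriving DecidableEq

/-- The instruction table of Minsky's universal Turing machine: for a state `i` and a color `j`,
`instr i j` is `some (d, q, p)` where `d` is the direction of the head movement, `q` the new
state and `p` the new color of the current cell; it is `none` exactly for the STOP pair
`(4, 3)`. -/
def instr : Fin 7 → Fin 4 → Option (Dir × Fin 7 × Fin 4) := fun i j =>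
  match i.val, j.val with
  | 0, 0 => some (Dir.L, 4, 1)
  | 0, 1 => some (Dir.L, 1, 3)
  | 0, 2 => some (Dir.R, 0, 0)
  | 0, 3 => some (Dir.R, 0, 1)
  | 1, 0 => some (Dir.L, 1, 2)
  | 1, 1 => some (Dir.L, 1, 3)
  | 1, 2 => some (Dir.R, 0, 0)
  | 1, 3 => some (Dir.L, 1, 3)
  | 2, 0 => some (Dir.R, 2, 2)
  | 2, 1 => some (Dir.R, 2, 1)
  | 2, 2 => some (Dir.R, 2, 0)
  | 2, 3 => some (Dir.L, 4, 1)
  | 3, 0 => some (Dir.R, 3, 2)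
  | 3, 1 => some (Dir.R, 3, 1)
  | 3, 2 => some (Dir.R, 3, 0)
  | 3, 3 => some (Dir.L, 4, 0)
  | 4, 0 => some (Dir.L, 5, 2)
  | 4, 1 => some (Dir.L, 4, 1)
  | 4, 2 => some (Dir.L, 4, 0)
  | 4, 3 => none
  | 5, 0 => some (Dir.L, 5, 2)
  | 5, 1 => some (Dir.L, 5, 1)
  | 5, 2 => some (Dir.L, 6, 2)
  | 5, 3 => some (Dir.R, 2, 1)
  | 6, 0 => some (Dir.R, 0, 3)
  | 6, 1 => some (Dir.R, 6, 3)
  | 6, 2 => some (Dir.R, 6, 2)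
  | 6, 3 => some (Dir.R, 3, 1)
  | _, _ => none

/-- The alphabet `Ψ = {t, s, a_0, …, a_3, Q_0, …, Q_6, P_0, …, P_3, L, R}`. -/
inductive Psi
  | t
  | s
  | a (k : Fin 4)
  | Q (i : Fin 7)
  | P (j : Fin 4)
  | L
  | R
deriving DecidableEq, Fintype

/-- The image in the free algebra of a word over the alphabet `Ψ`. -/
def wrd (K : Type*) [Field K] (l : List Psi) : FreeAlgebra K Psi :=
  (l.map (FreeAlgebra.ι K)).prod

open Psi in
/-- The defining relations of the algebra `H`. -/
inductive HRel (K : Type*) [Field K] : FreeAlgebra K Psi → FreeAlgebra K Psi → Prop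
  | rel1 (k : Fin 4) :
      HRel K (wrd K [t, L, a k]) (wrd K [L, t, a k])
  | rel2 (k l : Fin 4) :
      HRel K (wrd K [t, a k, a l]) (wrd K [a k, t, a l])
  | rel9 :
      HRel K (wrd K [s, R]) (wrd K [R, s])
  | rel8 (k : Fin 4) :
      HRel K (wrd K [s, a k]) (wrd K [a k, s])
  | rel3 (i : Fin 7) (j : Fin 4) (q : Fin 7) (p : Fin 4) (k : Fin 4)
      (h : instr i j = some (Dir.L, q, p)) :
      HRel K (wrd K [t, a k, Q i, P j]) (wrd K [Q q, P k, a p, s])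
  | rel5 (i : Fin 7) (j : Fin 4) (q : Fin 7) (p : Fin 4)
      (h : instr i j = some (Dir.L, q, p)) :
      HRel K (wrd K [t, L, Q i, P j]) (wrd K [L, Q q, P 0, a p, s])
  | rel4 (i : Fin 7) (j : Fin 4) (q : Fin 7) (p : Fin 4) (l k : Fin 4)
      (h : instr i j = some (Dir.R, q, p)) :
      HRel K (wrd K [t, a l, Q i, P j, a k]) (wrd K [a l, a p, Q q, P k, s])
  | rel4b (i : Fin 7) (j : Fin 4) (q : Fin 7) (p : Fin 4) (k : Fin 4)
      (h : instr i j = some (Dir.R, q, p)) :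
      HRel K (wrd K [t, L, Q i, P j, a k]) (wrd K [L, a p, Q q, P k, s])
  | rel6 (i : Fin 7) (j : Fin 4) (q : Fin 7) (p : Fin 4) (l : Fin 4)
      (h : instr i j = some (Dir.R, q, p)) :
      HRel K (wrd K [t, a l, Q i, P j, R]) (wrd K [a l, a p, Q q, P 0, R, s])
  | rel6b (i : Fin 7) (j : Fin 4) (q : Fin 7) (p : Fin 4)
      (h : instr i j = some (Dir.R, q, p)) :
      HRel K (wrd K [t, L, Q i, P j, R]) (wrd K [L, a p, Q q, P 0, R, s])
  | rel7 :
      HRel K (wrd K [Q 4, P 3]) 0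

/-- The algebra `H`: the quotient of the free associative unital `K`-algebra on `Ψ` by the
two-sided ideal generated by the defining relations. -/
abbrev AlgH (K : Type*) [Field K] := RingQuot (HRel K)

/-- The image in `H` of a word over the alphabet `Ψ`. -/
def mkw (K : Type*) [Field K] (l : List Psi) : AlgH K :=
  RingQuot.mkAlgHom K (HRel K) (wrd K l)

/-- The image of the letter `t` in `H`. -/
def tEl (K : Type*) [Field K] : AlgH K := mkw K [Psi.t]

/-- The image of the letter `s` in `H`. -/
def sEl (K : Type*) [Field K] : AlgH K := mkw K [Psi.s]

/-!
Both letters are cancellable against all of `H`, not only against words: each comes with a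
representation of `H` by upper triangular `2 × 2` matrices over `H` whose corner entry undoes the
multiplication by it.

For `t` it is `tRep : x ↦ !![x, ∂x; 0, ε x]`, where on words `∂` deletes a final `t` (and kills
words not ending in `t`) and `ε` is the constant term. It respects the relations because no
relator ends in `t`, and `∂ (x * t) = x`.

For `s` it is `sRep : x ↦ !![χ x, ∂x; 0, x]`, where `χ` (`sPassing` on letters) keeps the words
in the letters `a_k`, `R` only, and `∂` deletes the first `s` of a word if only letters `a_k`, `R`
precede it. The relations `s a_k = a_k s` and `s R = R s` move an `s` exactly past such letters,
and every other relator meets a letter other than `a_k`, `R`, `s` before any `s`. Here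
`∂ (s * x) = x`.
-/

namespace FreeAlgebra

variable {R X A : Type*} [CommSemiring R] [Semiring A] [Algebra R A]

def upperTriangularLift (f d g : X → A) : FreeAlgebra R X →ₐ[R] Matrix (Fin 2) (Fin 2) A :=
  lift R fun x => !![f x, d x; 0, g x]

theorem upperTriangularLift_apply (f d g : X → A) (z : FreeAlgebra R X) :
    upperTriangularLift f d g z =
      !![lift R f z, upperTriangularLift f d g z 0 1; 0, lift R g z] := by
  induction z using FreeAlgebra.induction with
  | grade0 r => ext i j; fin_cases i <;> fin_cases j <;> simp [Matrix.algebraMap_matrix_apply]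
  | grade1 x => ext i j; fin_cases i <;> fin_cases j <;> simp [upperTriangularLift]
  | add a b ha hb => rw [map_add, ha, hb]; ext i j; fin_cases i <;> fin_cases j <;> simp
  | mul a b ha hb => rw [map_mul, ha, hb]; ext i j; fin_cases i <;> fin_cases j <;> simp

end FreeAlgebra

section Words

variable (K : Type*) [Field K]

theorem mkw_append (x y : List Psi) : mkw K (x ++ y) = mkw K x * mkw K y := by
  simp [mkw, wrd]

theorem mkw_replicate (n : ℕ) (c : Psi) : mkw K (List.replicate n c) = mkw K [c] ^ n := by
  simp [mkw, wrd]

end Words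

namespace AlgH

open FreeAlgebra Psi

variable (K : Type*) [Field K]

local notation "π" => RingQuot.mkAlgHom K (HRel K)

def tRepFree : FreeAlgebra K Psi →ₐ[K] Matrix (Fin 2) (Fin 2) (AlgH K) :=
  upperTriangularLift (π ∘ ι K) (fun c => if c = t then 1 else 0) 0

theorem tRepFree_eq_of_hRel {u v : FreeAlgebra K Psi} (h : HRel K u v) :
    tRepFree K u = tRepFree K v := by
  have hmk := RingQuot.mkAlgHom_rel K h
  cases h <;> simp_all [wrd, tRepFree, upperTriangularLift, ← Matrix.of_zero]

def tRep : AlgH K →ₐ[K] Matrix (Fin 2) (Fin 2) (AlgH K) :=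
  RingQuot.liftAlgHom K ⟨tRepFree K, fun _ _ h => tRepFree_eq_of_hRel K h⟩

theorem tRep_apply_zero_zero (x : AlgH K) : tRep K x 0 0 = x := by
  obtain ⟨z, rfl⟩ := RingQuot.mkAlgHom_surjective K (HRel K) x
  rw [tRep, RingQuot.liftAlgHom_mkAlgHom_apply, tRepFree, upperTriangularLift_apply]
  simp

theorem tRep_mul_tEl_zero_one (x : AlgH K) : tRep K (x * tEl K) 0 1 = x := by
  rw [map_mul, Matrix.mul_apply, Fin.sum_univ_two, tRep_apply_zero_zero]
  simp [tRep, tEl, mkw, wrd, tRepFree, upperTriangularLift]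

theorem isRightRegular_tEl : IsRightRegular (tEl K) :=
  Function.LeftInverse.injective (g := fun y => tRep K y 0 1) (tRep_mul_tEl_zero_one K)

def sPassing : Psi → AlgH K
  | a k => π (ι K (a k))
  | R => π (ι K R)
  | _ => 0

def sRepFree : FreeAlgebra K Psi →ₐ[K] Matrix (Fin 2) (Fin 2) (AlgH K) :=
  upperTriangularLift (sPassing K) (fun c => if c = s then 1 else 0) (π ∘ ι K)

theorem sRepFree_eq_of_hRel {u v : FreeAlgebra K Psi} (h : HRel K u v) :
    sRepFree K u = sRepFree K v := by
  have hmk := RingQuot.mkAlgHom_rel K h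
  cases h <;> simp_all [wrd, sRepFree, upperTriangularLift, sPassing, ← Matrix.of_zero]

def sRep : AlgH K →ₐ[K] Matrix (Fin 2) (Fin 2) (AlgH K) :=
  RingQuot.liftAlgHom K ⟨sRepFree K, fun _ _ h => sRepFree_eq_of_hRel K h⟩

theorem sRep_apply_one_one (x : AlgH K) : sRep K x 1 1 = x := by
  obtain ⟨z, rfl⟩ := RingQuot.mkAlgHom_surjective K (HRel K) x
  rw [sRep, RingQuot.liftAlgHom_mkAlgHom_apply, sRepFree, upperTriangularLift_apply]
  simp

theorem sRep_sEl_mul_zero_one (x : AlgH K) : sRep K (sEl K * x) 0 1 = x := by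
  rw [map_mul, Matrix.mul_apply, Fin.sum_univ_two, sRep_apply_one_one]
  simp [sRep, sEl, mkw, wrd, sRepFree, upperTriangularLift, sPassing]

theorem isLeftRegular_sEl : IsLeftRegular (sEl K) :=
  Function.LeftInverse.injective (g := fun y => sRep K y 0 1) (sRep_sEl_mul_zero_one K)

end AlgH

/-- For any word `X` over `Ψ` and any natural number `n`: if the image of
`X·t^n` in `H` is `0` then the image of `X` in `H` is `0`; and if the image of `s^n·X` in `H`
is `0` then the image of `X` in `H` is `0`. -/
theorem cancel_tn_right_sn_left (K : Type*) [Field K] (X : List Psi) (n : ℕ) :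
    (mkw K (X ++ List.replicate n Psi.t) = 0 → mkw K X = 0) ∧
    (mkw K (List.replicate n Psi.s ++ X) = 0 → mkw K X = 0) := by
  rw [mkw_append, mkw_append, mkw_replicate, mkw_replicate, ← tEl, ← sEl]
  exact ⟨((AlgH.isRightRegular_tEl K).pow n).mul_right_eq_zero_iff.mp,
    ((AlgH.isLeftRegular_sEl K).pow n).mul_left_eq_zero_iff.mp⟩
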